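/- Every instance of 3-SAT in which each clause contains exactly three distinct variables and every variable appears in at most three clauses is satisfiable. -/
import Mathlib


/-- A literal is a sign together with a variable; `(true, v)` is the positive
literal `v` and `(false, v)` is the negative literal `¬v`. -/
abbrev Lit (V : Type*) := Bool × V

/-- A clause is a finite set of literals. -/
abbrev Clause (V : Type*) := Finset (Lit V)

/-- An assignment satisfies a clause if it makes at least one literal true. -/
def SatClause {V : Type*} (σ : V → Bool) (C : Clause V) : Prop :=
  ∃ l ∈ C, σ l.2 = l.1

/-- An assignment satisfies a CNF formula (a collection of clauses) if it
satisfies every clause. -/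
def Sat {V : Type*} (σ : V → Bool) (F : Set (Clause V)) : Prop :=
  ∀ C ∈ F, SatClause σ C

/-- A formula is satisfiable if some assignment satisfies it. -/
def Satisfiable {V : Type*} (F : Set (Clause V)) : Prop :=
  ∃ σ, Sat σ F

/-- A variable occurs (positively or negatively) in a clause. -/
def VarInClause {V : Type*} (v : V) (C : Clause V) : Prop :=
  (true, v) ∈ C ∨ (false, v) ∈ C

/-- A variable occurs in a formula. -/
def VarInFormula {V : Type*} (v : V) (F : Set (Clause V)) : Prop :=
  ∃ C ∈ F, VarInClause v C

open scoped Classical in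
/-- **Tovey's theorem.** Every 3-SAT instance in which each clause consists of
exactly three distinct literals over three distinct variables and every
variable appears in at most three clauses is satisfiable. -/
theorem tovey_satisfiable {V : Type*} [DecidableEq V]
    (F : Finset (Clause V))
    (hclause : ∀ C ∈ F, C.card = 3 ∧ (C.image Prod.snd).card = 3)
    (happ : ∀ x : V, (F.filter (fun C => VarInClause x C)).card ≤ 3) :
    Satisfiable (↑F : Set (Clause V)) := by
  classical
  -- the variables of a clause
  set vars : {C // C ∈ F} → Finset V := fun C => C.1.image Prod.snd with hvars
  have hmemvar : ∀ (C : {C // C ∈ F}) (v : V), v ∈ vars C → VarInClause v C.1 := by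
    rintro C v hv
    simp only [hvars, Finset.mem_image] at hv
    obtain ⟨⟨b, w⟩, hbw, rfl⟩ := hv
    cases b
    · exact Or.inr hbw
    · exact Or.inl hbw
  -- Hall's condition via double counting
  have hall : ∀ s : Finset {C // C ∈ F}, s.card ≤ (s.biUnion vars).card := by
    intro s
    have key : (s.biUnion vars).card * 3 ≤ s.card * 3 → False → True := fun _ _ => trivial
    have h3 : s.card * 3 ≤ (s.biUnion vars).card * 3 := by
      apply Finset.card_mul_le_card_mul (fun C v => v ∈ vars C)
      · intro C hC
        have hsub : vars C ⊆ (s.biUnion vars).bipartiteAbove (fun C v => v ∈ vars C) C := by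
          intro v hv
          simp only [Finset.mem_bipartiteAbove]
          exact ⟨Finset.mem_biUnion.2 ⟨C, hC, hv⟩, hv⟩
        calc 3 = (vars C).card := ((hclause C.1 C.2).2).symm
          _ ≤ _ := Finset.card_le_card hsub
      · intro v _
        have hsub : s.bipartiteBelow (fun C v => v ∈ vars C) v ⊆
            (F.attach.filter (fun C => VarInClause v C.1)) := by
          intro C hC
          simp only [Finset.mem_bipartiteBelow] at hC
          exact Finset.mem_filter.2 ⟨Finset.mem_attach _ _, hmemvar C v hC.2⟩
        have hcard : (F.attach.filter (fun C => VarInClause v C.1)).card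
            = (F.filter (fun C => VarInClause v C)).card := by
          apply Finset.card_bij (fun C _ => C.1)
          · intro C hC
            simp only [Finset.mem_filter] at hC ⊢
            exact ⟨C.2, hC.2⟩
          · intro C _ C' _ h
            exact Subtype.ext h
          · intro C hC
            simp only [Finset.mem_filter] at hC
            exact ⟨⟨C, hC.1⟩, Finset.mem_filter.2 ⟨Finset.mem_attach _ _, hC.2⟩, rfl⟩
        calc (s.bipartiteBelow (fun C v => v ∈ vars C) v).card
            ≤ (F.attach.filter (fun C => VarInClause v C.1)).card := Finset.card_le_card hsub
          _ = _ := hcard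
          _ ≤ 3 := happ v
    exact Nat.le_of_mul_le_mul_right h3 (by norm_num)
  obtain ⟨f, hfinj, hfmem⟩ := (Finset.all_card_le_biUnion_card_iff_exists_injective vars).1 hall
  -- define the assignment
  refine ⟨fun v => if ∃ C : {C // C ∈ F}, f C = v ∧ (true, v) ∈ C.1 then true else false, ?_⟩
  intro C hC
  rw [Finset.mem_coe] at hC
  set Cs : {C // C ∈ F} := ⟨C, hC⟩ with hCs
  have hv := hfmem Cs
  simp only [hvars, Finset.mem_image] at hv
  obtain ⟨⟨b, w⟩, hbw, hw⟩ := hv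
  simp only at hw
  subst hw
  cases b with
  | true =>
    refine ⟨(true, f Cs), hbw, ?_⟩
    simp only
    rw [if_pos ⟨Cs, rfl, hbw⟩]
  | false =>
    refine ⟨(false, f Cs), hbw, ?_⟩
    simp only
    rw [if_neg]
    rintro ⟨C', hC', htrue⟩
    have : C' = Cs := hfinj hC'
    subst this
    -- both (true, f Cs) and (false, f Cs) in C contradicts distinct variables
    have hcard := hclause C hC
    have hinj : Set.InjOn Prod.snd (C : Set (Lit V)) := by
      apply Finset.injOn_of_card_image_eq
      rw [hcard.2, hcard.1]
    have := hinj (show ((true, f Cs) : Lit V) ∈ (C : Set (Lit V)) from htrue) (show ((false, f Cs) : Lit V) ∈ (C : Set (Lit V)) from hbw) rfl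
    simp at this
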